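/- arXiv:0707.2505 — 4 statements merged into one kernel-verified Lean document; each statement's English description precedes it below -/
import Mathlib

section
/- Let φ(z) = z² + z and let α ∈ ℚ with α > 0. Write φⁿ(α) = Aₙ/Bₙ in lowest terms with Aₙ, Bₙ > 0. Then for every n ≥ 1, Aₙ has a primitive prime divisor: there exists a prime p with p ∣ Aₙ and p ∤ Aᵢ for all 0 ≤ i < n. In other words, the Zsigmondy set of (Aₙ) is empty. -/
/-!
Writing `φⁿ(α) = Aₙ / Bₙ`, the numerator obeys `Aₙ₊₁ = Aₙ (Aₙ + Bₙ)`, since `Aₙ (Aₙ + Bₙ)` and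
`Bₙ²` are coprime. Hence `Aᵢ ∣ Aₙ` for `i ≤ n`, and any prime factor of `Aₙ + Bₙ ≥ 2` divides
`Aₙ₊₁` but not `Aₙ`, because it would then also divide `Bₙ`.
-/

local notation "φ" => fun z : ℚ => z ^ 2 + z

theorem Rat.num_sq_add_self (q : ℚ) : (q ^ 2 + q).num = q.num * (q.num + q.den) := by
  have hcop : IsCoprime q.num q.den := Int.isCoprime_iff_gcd_eq_one.mpr q.reduced
  have hcop' : IsCoprime (q.num * (q.num + q.den)) ((q.den : ℤ) ^ 2) :=
    (hcop.mul_left (by simpa using hcop.add_mul_left_left 1)).pow_right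
  have hq : q ^ 2 + q = ((q.num * (q.num + q.den) : ℤ) : ℚ) / ((q.den ^ 2 : ℤ) : ℚ) := by
    nth_rw 1 2 [← Rat.num_div_den q]
    push_cast
    field_simp
  rw [hq, Rat.num_div_eq_of_coprime (by positivity) (Int.isCoprime_iff_gcd_eq_one.mp hcop')]

theorem Rat.exists_prime_dvd_num_add_den_not_dvd_num {q : ℚ} (hq : 0 < q) :
    ∃ p : ℕ, p.Prime ∧ (p : ℤ) ∣ q.num + q.den ∧ ¬ (p : ℤ) ∣ q.num := by
  have hnum : 0 < q.num := Rat.num_pos.mpr hq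
  have hden : 0 < q.den := q.den_pos
  obtain ⟨p, hp, hpdvd⟩ := Nat.exists_prime_and_dvd (n := (q.num + q.den).natAbs) (by omega)
  have hpdvd' : (p : ℤ) ∣ q.num + q.den := Int.ofNat_dvd_left.mpr hpdvd
  refine ⟨p, hp, hpdvd', fun hpnum => hp.one_lt.ne' ?_⟩
  have hpden : p ∣ q.den := by
    simpa using Int.natCast_dvd_natCast.mp ((dvd_sub hpdvd' hpnum).trans (by simp))
  exact Nat.eq_one_of_dvd_coprimes q.reduced (Int.ofNat_dvd_left.mp hpnum) hpden

theorem num_iterate_sq_add_self_dvd (α : ℚ) {i j : ℕ} (hij : i ≤ j) :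
    (φ^[i] α).num ∣ (φ^[j] α).num := by
  induction j, hij using Nat.le_induction with
  | base => rfl
  | succ j _ ih =>
    rw [Function.iterate_succ_apply', Rat.num_sq_add_self]
    exact ih.mul_right _

theorem iterate_sq_add_self_pos {α : ℚ} (hα : 0 < α) (n : ℕ) : 0 < φ^[n] α := by
  have hmaps : Set.MapsTo φ (Set.Ioi 0) (Set.Ioi 0) := fun z (hz : 0 < z) =>
    show 0 < z ^ 2 + z by positivity
  exact hmaps.iterate n hα

theorem stmt2 (α : ℚ) (hα : 0 < α) (n : ℕ) (hn : 1 ≤ n) :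
    ∃ p : ℕ, p.Prime ∧ (p : ℤ) ∣ ((fun z : ℚ => z ^ 2 + z)^[n] α).num ∧
      ∀ i < n, ¬ (p : ℤ) ∣ ((fun z : ℚ => z ^ 2 + z)^[i] α).num := by
  obtain ⟨m, rfl⟩ := Nat.exists_eq_add_of_le' hn
  obtain ⟨p, hp, hpdvd, hpndvd⟩ :=
    Rat.exists_prime_dvd_num_add_den_not_dvd_num (iterate_sq_add_self_pos hα m)
  refine ⟨p, hp, ?_, fun i hi hpi =>
    hpndvd (hpi.trans (num_iterate_sq_add_self_dvd α (by omega)))⟩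
  rw [Function.iterate_succ_apply', Rat.num_sq_add_self]
  exact hpdvd.mul_left _
end

section
/- Let d ≥ 2 and let F(z) ∈ ℤ[z] be a polynomial of degree at most d with F(0) = 1, and set φ(z) = z^d / F(z) as a rational function. Let α = A₁/B₁ ∈ ℚ be in lowest terms with φⁿ(α) defined and nonzero for all n, and write φⁿ(α) = Aₙ/Bₙ in lowest terms. Then the set of primes dividing Aₙ equals the set of primes dividing A₁ for all n ≥ 1; in particular Aₙ has no primitive prime divisor for any n ≥ 2. -/
/-!
Write `x = a / b` in lowest terms and let `G = b ^ d F(a / b)`, the degree-`d` homogenization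
of `F` evaluated at `(a, b)`, an integer. Then `φ x = a ^ d / G`, and modulo any prime dividing
`a` we have `G ≡ F(0) b ^ d = b ^ d ≢ 0`, so `a ^ d` and `G` are coprime and the numerator of
`φ x` is `± a ^ d`. By induction the numerator of `φⁿ α` is `± A₁ ^ dⁿ`, whose prime divisors are
those of `A₁`.
-/

open Polynomial

lemma Polynomial.map_eval_homogenize {R K : Type*} [CommSemiring R] [Semifield K] (f : R →+* K)
    {p : R[X]} {n : ℕ} (hn : p.natDegree ≤ n) (x : Fin 2 → R) (hx : f (x 1) ≠ 0) :
    f (MvPolynomial.eval x (p.homogenize n)) =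
      (p.map f).eval (f (x 0) / f (x 1)) * f (x 1) ^ n := by
  rw [MvPolynomial.map_eval, ← homogenize_map,
    eval_homogenize (natDegree_map_le.trans hn) _ hx]
  rfl

lemma Rat.num_div_associated {a b : ℤ} (hb : b ≠ 0) (hab : IsCoprime a b) :
    Associated ((a / b : ℚ).num) a := by
  obtain ⟨c, hca, hcb⟩ := Rat.num_den_mk hb (Rat.divInt_eq_div a b).symm
  have hc : IsUnit c := hab.isUnit_of_dvd' ⟨_, hca⟩ ⟨_, hcb⟩
  have := (associated_unit_mul_left (a / b : ℚ).num c hc).symm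
  rwa [← hca] at this

section Homogenization

variable {F : ℤ[X]} {d : ℕ}

lemma not_dvd_eval_homogenize (hF0 : F.coeff 0 = 1) (hdeg : F.natDegree ≤ d) {p : ℕ}
    (hp : p.Prime) {a b : ℤ} (hpa : (p : ℤ) ∣ a) (hpb : ¬ (p : ℤ) ∣ b) :
    ¬ (p : ℤ) ∣ MvPolynomial.eval ![a, b] (F.homogenize d) := by
  have := Fact.mk hp
  rw [← ZMod.intCast_zmod_eq_zero_iff_dvd] at hpa hpb ⊢
  have := map_eval_homogenize (Int.castRingHom (ZMod p)) hdeg ![a, b] hpb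
  simp_all [← coeff_zero_eq_eval_zero]

lemma isCoprime_eval_homogenize (hF0 : F.coeff 0 = 1) (hdeg : F.natDegree ≤ d) {a b : ℤ}
    (hab : IsCoprime a b) : IsCoprime a (MvPolynomial.eval ![a, b] (F.homogenize d)) := by
  rw [Int.isCoprime_iff_gcd_eq_one]
  refine Nat.coprime_of_dvd fun p hp hpa hpG => ?_
  rw [← Int.ofNat_dvd_left] at hpa hpG
  have hpb : ¬ (p : ℤ) ∣ b := fun hpb =>
    (Nat.prime_iff_prime_int.mp hp).not_isUnit (hab.isUnit_of_dvd' hpa hpb)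
  exact not_dvd_eval_homogenize hF0 hdeg hp hpa hpb hpG

lemma cast_eval_homogenize_num_den (hdeg : F.natDegree ≤ d) (x : ℚ) :
    (MvPolynomial.eval ![x.num, (x.den : ℤ)] (F.homogenize d) : ℚ) = aeval x F * x.den ^ d := by
  have := map_eval_homogenize (Int.castRingHom ℚ) hdeg ![x.num, (x.den : ℤ)]
    (by simp [x.den_nz])
  simpa [Rat.num_div_den, aeval_def, eval_map] using this

theorem num_pow_div_aeval_associated (hF0 : F.coeff 0 = 1) (hdeg : F.natDegree ≤ d) {x : ℚ}
    (hx : aeval x F ≠ 0) : Associated (x ^ d / aeval x F).num (x.num ^ d) := by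
  set G := MvPolynomial.eval ![x.num, (x.den : ℤ)] (F.homogenize d)
  have hG : (G : ℚ) = aeval x F * x.den ^ d := cast_eval_homogenize_num_den hdeg x
  have hG0 : G ≠ 0 := by
    intro h
    simp [h, x.den_nz, hx] at hG
  have hxd : x ^ d / aeval x F = ((x.num ^ d : ℤ) : ℚ) / G := by
    nth_rewrite 1 [← Rat.num_div_den x]
    rw [hG, Int.cast_pow, div_pow, div_div, mul_comm]
  rw [hxd]
  exact Rat.num_div_associated hG0
    ((isCoprime_eval_homogenize hF0 hdeg x.isCoprime_num_den).pow_left)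

theorem num_iterate_associated (hF0 : F.coeff 0 = 1) (hdeg : F.natDegree ≤ d) {φ : ℚ → ℚ}
    (hφ : ∀ x, φ x = x ^ d / aeval x F) {α : ℚ} (hdef : ∀ n, aeval (φ^[n] α) F ≠ 0) (n : ℕ) :
    Associated (φ^[n] α).num (α.num ^ d ^ n) := by
  induction n with
  | zero => simp
  | succ n ih =>
    rw [Function.iterate_succ_apply', hφ, pow_succ, pow_mul]
    exact (num_pow_div_aeval_associated hF0 hdeg (hdef n)).trans ih.pow_pow

end Homogenization

theorem stmt3_general (d : ℕ) (hd : 2 ≤ d) (F : Polynomial ℤ)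
    (hdeg : F.natDegree ≤ d) (hF0 : F.coeff 0 = 1)
    (φ : ℚ → ℚ) (hφ : ∀ x : ℚ, φ x = x ^ d / Polynomial.aeval x F)
    (α : ℚ)
    (hdef : ∀ n : ℕ, Polynomial.aeval (φ^[n] α) F ≠ 0) :
    (∀ n, 1 ≤ n → ∀ p : ℕ, p.Prime →
        ((p : ℤ) ∣ (φ^[n - 1] α).num ↔ (p : ℤ) ∣ α.num)) ∧
    (∀ n, 2 ≤ n → ¬ ∃ p : ℕ, p.Prime ∧ (p : ℤ) ∣ (φ^[n - 1] α).num ∧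
        ∀ i, 1 ≤ i → i < n → ¬ (p : ℤ) ∣ (φ^[i - 1] α).num) := by
  have prime_dvd_iff (n p : ℕ) (hp : p.Prime) :
      (p : ℤ) ∣ (φ^[n] α).num ↔ (p : ℤ) ∣ α.num := by
    rw [(num_iterate_associated hF0 hdeg hφ hdef n).dvd_iff_dvd_right,
      (Nat.prime_iff_prime_int.mp hp).dvd_pow_iff_dvd (pow_ne_zero n (by omega))]
  refine ⟨fun n _ p hp => prime_dvd_iff (n - 1) p hp, ?_⟩
  rintro n hn ⟨p, hp, hpn, hprim⟩
  exact hprim 1 le_rfl hn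
    ((prime_dvd_iff 0 p hp).mpr ((prime_dvd_iff (n - 1) p hp).mp hpn))

theorem stmt3 (d : ℕ) (hd : 2 ≤ d) (F : Polynomial ℤ)
    (hdeg : F.natDegree ≤ d) (hF0 : F.coeff 0 = 1)
    (φ : ℚ → ℚ) (hφ : ∀ x : ℚ, φ x = x ^ d / Polynomial.aeval x F)
    (α : ℚ)
    (hdef : ∀ n : ℕ, Polynomial.aeval (φ^[n] α) F ≠ 0)
    (hnz : ∀ n : ℕ, φ^[n] α ≠ 0) :
    (∀ n, 1 ≤ n → ∀ p : ℕ, p.Prime →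
        ((p : ℤ) ∣ (φ^[n - 1] α).num ↔ (p : ℤ) ∣ α.num)) ∧
    (∀ n, 2 ≤ n → ¬ ∃ p : ℕ, p.Prime ∧ (p : ℤ) ∣ (φ^[n - 1] α).num ∧
        ∀ i, 1 ≤ i → i < n → ¬ (p : ℤ) ∣ (φ^[i - 1] α).num) :=
  stmt3_general d hd F hdeg hF0 φ hφ α hdef
end

section
/- Let p be a prime and φ(z) = (a_e z^e + ⋯ + a_d z^d)/(b₀ + ⋯ + b_d z^d) with integer coefficients, 0 < e < d, p ∤ a_e b₀. Let α ∈ ℚ be such that all iterates φⁿ(α) are defined and nonzero, and let r = min{ n ≥ 0 : ord_p(φⁿ(α)) > 0 } (assumed finite). Then for all k ≥ r, ord_p(φᵏ(α)) = e^{k−r} · ord_p(φʳ(α)). -/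
/-!
Write `x` for a rational with `ord_p x = v > 0`. In the numerator of `φ(x)` the term `a_e x^e`
has valuation exactly `e v`, while every `a_i x^i` with `i > e` has valuation at least
`i v > e v`; in the denominator `b₀` has valuation `0` and the other terms positive valuation.
By the ultrametric inequality neither sum vanishes and `ord_p φ(x) = e v > 0`, so the step
repeats along the orbit.
-/

namespace padicValRat

variable {p : ℕ} [Fact p.Prime]

lemma lt_sum_of_forall_lt {ι : Type*} {c : ℤ} {S : Finset ι} {F : ι → ℚ}
    (hF : ∀ i ∈ S, F i ≠ 0 → c < padicValRat p (F i)) (hS : ∑ i ∈ S, F i ≠ 0) :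
    c < padicValRat p (∑ i ∈ S, F i) := by
  classical
  induction S using Finset.induction with
  | empty => simp at hS
  | @insert j S hj ih =>
    rw [Finset.sum_insert hj] at hS ⊢
    have ih' := fun h => ih (fun i hi => hF i (Finset.mem_insert_of_mem hi)) h
    by_cases hFj : F j = 0
    · rw [hFj, zero_add] at hS ⊢
      exact ih' hS
    by_cases hrest : ∑ i ∈ S, F i = 0
    · rw [hrest, add_zero] at hS ⊢
      exact hF j (Finset.mem_insert_self j S) hFj
    exact (lt_min (hF j (Finset.mem_insert_self j S) hFj) (ih' hrest)).trans_le
      (min_le_padicValRat_add hS)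

lemma sum_ne_zero_and_eq_of_lt {ι : Type*} {S : Finset ι} {F : ι → ℚ} {j : ι} (hj : j ∈ S)
    (hFj : F j ≠ 0)
    (hlt : ∀ i ∈ S, i ≠ j → F i ≠ 0 → padicValRat p (F j) < padicValRat p (F i)) :
    ∑ i ∈ S, F i ≠ 0 ∧ padicValRat p (∑ i ∈ S, F i) = padicValRat p (F j) := by
  classical
  rw [← Finset.add_sum_erase S F hj]
  set R := ∑ i ∈ S.erase j, F i
  by_cases hR : R = 0
  · simpa [hR] using hFj
  have hltR : padicValRat p (F j) < padicValRat p R := lt_sum_of_forall_lt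
    (fun i hi => hlt i (Finset.mem_of_mem_erase hi) (Finset.ne_of_mem_erase hi)) hR
  have hne : F j + R ≠ 0 := by
    intro hzero
    rw [add_eq_zero_iff_eq_neg] at hzero
    rw [hzero, padicValRat.neg] at hltR
    exact hltR.false
  exact ⟨hne, add_eq_of_lt hne hFj hR hltR⟩


lemma intCast_mul_pow_of_not_dvd {c : ℤ} (hc : ¬ (p : ℤ) ∣ c) {x : ℚ} (hx : x ≠ 0) (i : ℕ) :
    padicValRat p (c * x ^ i) = i * padicValRat p x := by
  have hc0 : (c : ℚ) ≠ 0 := Int.cast_ne_zero.mpr fun h => hc (h ▸ dvd_zero _)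
  rw [padicValRat.mul hc0 (pow_ne_zero i hx), padicValRat.pow, of_int,
    padicValInt.eq_zero_of_not_dvd hc, Nat.cast_zero, zero_add]

lemma le_intCast_mul_pow {c : ℤ} {x : ℚ} {i : ℕ} (h : (c : ℚ) * x ^ i ≠ 0) :
    i * padicValRat p x ≤ padicValRat p (c * x ^ i) := by
  rw [padicValRat.mul (left_ne_zero_of_mul h) (right_ne_zero_of_mul h), padicValRat.pow, of_int]
  exact le_add_of_nonneg_left (Nat.cast_nonneg _)

lemma sum_intCast_mul_pow_ne_zero_and_eq {x : ℚ} (hx : 0 < padicValRat p x) {c : ℕ → ℤ}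
    {S : Finset ℕ} {m : ℕ} (hm : m ∈ S) (hmin : ∀ i ∈ S, m ≤ i) (hc : ¬ (p : ℤ) ∣ c m) :
    ∑ i ∈ S, (c i : ℚ) * x ^ i ≠ 0 ∧
      padicValRat p (∑ i ∈ S, (c i : ℚ) * x ^ i) = m * padicValRat p x := by
  have hx0 : x ≠ 0 := fun h => by simp [h] at hx
  have hval := intCast_mul_pow_of_not_dvd (p := p) hc hx0 m
  have hcm : (c m : ℚ) * x ^ m ≠ 0 :=
    mul_ne_zero (Int.cast_ne_zero.mpr fun h => hc (h ▸ dvd_zero _)) (pow_ne_zero m hx0)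
  rw [← hval]
  refine sum_ne_zero_and_eq_of_lt hm hcm fun i hi hne hci => ?_
  have hmi : (m : ℤ) < i := by exact_mod_cast (hmin i hi).lt_of_ne hne.symm
  calc padicValRat p (c m * x ^ m) = m * padicValRat p x := hval
    _ < i * padicValRat p x := mul_lt_mul_of_pos_right hmi hx
    _ ≤ padicValRat p (c i * x ^ i) := le_intCast_mul_pow hci

end padicValRat

lemma padicValRat_rationalMap_eq_mul {p : ℕ} [Fact p.Prime] {e d : ℕ} (hed : e ≤ d)
    {a b : ℕ → ℤ} (ha : ¬ (p : ℤ) ∣ a e) (hb : ¬ (p : ℤ) ∣ b 0) {x : ℚ}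
    (hx : 0 < padicValRat p x) :
    padicValRat p ((∑ i ∈ Finset.Icc e d, (a i : ℚ) * x ^ i)
        / (∑ i ∈ Finset.range (d + 1), (b i : ℚ) * x ^ i)) = e * padicValRat p x := by
  obtain ⟨hN, hvN⟩ := padicValRat.sum_intCast_mul_pow_ne_zero_and_eq hx
    (Finset.left_mem_Icc.mpr hed) (fun i hi => (Finset.mem_Icc.mp hi).1) ha
  obtain ⟨hD, hvD⟩ := padicValRat.sum_intCast_mul_pow_ne_zero_and_eq hx
    (Finset.mem_range.mpr d.succ_pos) (fun i _ => i.zero_le) hb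
  rw [padicValRat.div hN hD, hvN, hvD, Nat.cast_zero, zero_mul, sub_zero]

lemma Function.map_iterate_eq_pow_mul {α : Type*} {f : α → α} {v : α → ℤ} {e : ℕ}
    (he : 0 < e) (hf : ∀ x, 0 < v x → v (f x) = e * v x) {x : α} (hx : 0 < v x) (n : ℕ) :
    v (f^[n] x) = e ^ n * v x := by
  induction n generalizing x with
  | zero => simp
  | succ n ih =>
    have hfx : 0 < v (f x) := hf x hx ▸ mul_pos (by exact_mod_cast he) hx
    rw [Function.iterate_succ_apply, ih hfx, hf x hx, pow_succ, mul_assoc]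

theorem stmt6_general (p : ℕ) (hp : p.Prime) (e d : ℕ) (he : 0 < e) (hed : e < d)
    (a b : ℕ → ℤ)
    (hgood : ¬ (p : ℤ) ∣ a e * b 0)
    (φ : ℚ → ℚ)
    (hφ : ∀ x : ℚ, φ x = (∑ i ∈ Finset.Icc e d, (a i : ℚ) * x ^ i)
            / (∑ i ∈ Finset.range (d + 1), (b i : ℚ) * x ^ i))
    (α : ℚ)
    (r : ℕ) (hr : 0 < padicValRat p (φ^[r] α)) :
    ∀ k, r ≤ k → padicValRat p (φ^[k] α) = (e : ℤ) ^ (k - r) * padicValRat p (φ^[r] α) := by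
  have : Fact p.Prime := ⟨hp⟩
  have hstep : ∀ x, 0 < padicValRat p x → padicValRat p (φ x) = e * padicValRat p x :=
    fun x hx => hφ x ▸ padicValRat_rationalMap_eq_mul hed.le
      (fun h => hgood (h.mul_right _)) (fun h => hgood (h.mul_left _)) hx
  intro k hk
  obtain ⟨n, rfl⟩ := Nat.exists_eq_add_of_le hk
  rw [Nat.add_sub_cancel_left, add_comm, Function.iterate_add_apply]
  exact Function.map_iterate_eq_pow_mul he hstep hr n

theorem stmt6 (p : ℕ) (hp : p.Prime) (e d : ℕ) (he : 0 < e) (hed : e < d)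
    (a b : ℕ → ℤ) (hae : a e ≠ 0) (hb0 : b 0 ≠ 0)
    (hgood : ¬ (p : ℤ) ∣ a e * b 0)
    (φ : ℚ → ℚ)
    (hφ : ∀ x : ℚ, φ x = (∑ i ∈ Finset.Icc e d, (a i : ℚ) * x ^ i)
            / (∑ i ∈ Finset.range (d + 1), (b i : ℚ) * x ^ i))
    (α : ℚ)
    (hdef : ∀ n : ℕ, (∑ i ∈ Finset.range (d + 1), (b i : ℚ) * (φ^[n] α) ^ i) ≠ 0)
    (hnz : ∀ n : ℕ, φ^[n] α ≠ 0)
    (r : ℕ) (hr : 0 < padicValRat p (φ^[r] α))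
    (hrmin : ∀ m < r, ¬ 0 < padicValRat p (φ^[m] α)) :
    ∀ k, r ≤ k → padicValRat p (φ^[k] α) = (e : ℤ) ^ (k - r) * padicValRat p (φ^[r] α) :=
  stmt6_general p hp e d he hed a b hgood φ hφ α r hr
end

section
/- Let φ: X → X, γ ∈ X with φᵏ(γ) = γ, k ≥ 2, and let ≡ be an equivalence relation compatible with φ such that φⁱ(γ) ≢ γ for all 1 ≤ i < k. Then for any α ∈ X, the set of residues i ∈ {0, 1, …, k−1} for which there exists n ≥ 0 with φ^{nk+i}(α) ≡ γ contains at most one element. -/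
/-!
If `φ^[a] α` and `φ^[b] α` with `a ≤ b` are both equivalent to `γ`, applying `φ^[b - a]` to the
first relation and using compatibility gives `φ^[b - a] γ ≡ γ`; since `γ` is periodic, this is
`φ^[(b - a) % k] γ ≡ γ`, and exactness of the period modulo `≡` forces `k ∣ b - a`.
-/

open Function

section IterateRel

variable {X : Type*} {φ : X → X} {r : X → X → Prop}

theorem rel_iterate_of_rel (hcompat : ∀ x y, r x y → r (φ x) (φ y)) (t : ℕ) {x y : X}
    (h : r x y) : r (φ^[t] x) (φ^[t] y) := by
  induction t with
  | zero => exact h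
  | succ t ih =>
    rw [iterate_succ_apply', iterate_succ_apply']
    exact hcompat _ _ ih

theorem rel_iterate_sub_of_rel_iterate (hequiv : Equivalence r)
    (hcompat : ∀ x y, r x y → r (φ x) (φ y)) {α γ : X} {a b : ℕ} (hab : a ≤ b)
    (ha : r (φ^[a] α) γ) (hb : r (φ^[b] α) γ) : r (φ^[b - a] γ) γ := by
  have hshift : r (φ^[b] α) (φ^[b - a] γ) := by
    simpa only [← iterate_add_apply, Nat.sub_add_cancel hab] using
      rel_iterate_of_rel hcompat (b - a) ha
  exact hequiv.trans (hequiv.symm hshift) hb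

theorem modEq_of_rel_iterate (hequiv : Equivalence r) (hcompat : ∀ x y, r x y → r (φ x) (φ y))
    {γ : X} {k : ℕ} (hk : 0 < k) (hγ : IsPeriodicPt φ k γ)
    (hper : ∀ i, 1 ≤ i → i < k → ¬ r (φ^[i] γ) γ) {α : X} {a b : ℕ}
    (ha : r (φ^[a] α) γ) (hb : r (φ^[b] α) γ) : a ≡ b [MOD k] := by
  wlog hab : a ≤ b generalizing a b
  · exact (this hb ha (le_of_not_ge hab)).symm
  have hrel : r (φ^[(b - a) % k] γ) γ := by
    rw [hγ.iterate_mod_apply]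
    exact rel_iterate_sub_of_rel_iterate hequiv hcompat hab ha hb
  have hmod : (b - a) % k = 0 := by
    by_contra hne
    exact hper _ (Nat.one_le_iff_ne_zero.mpr hne) (Nat.mod_lt _ hk) hrel
  exact (Nat.modEq_iff_dvd' hab).mpr (Nat.dvd_of_mod_eq_zero hmod)

end IterateRel

theorem stmt12_general {X : Type*} (φ : X → X) (γ : X) (k : ℕ)
    (hγ : φ^[k] γ = γ) (r : X → X → Prop) (hequiv : Equivalence r)
    (hcompat : ∀ x y, r x y → r (φ x) (φ y))
    (hper : ∀ i, 1 ≤ i → i < k → ¬ r (φ^[i] γ) γ)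
    (α : X) :
    ∀ i j, i < k → j < k →
      (∃ n : ℕ, r (φ^[n * k + i] α) γ) → (∃ n : ℕ, r (φ^[n * k + j] α) γ) →
      i = j := by
  rintro i j hi hj ⟨n, hn⟩ ⟨m, hm⟩
  have hk : 0 < k := Nat.zero_lt_of_lt hi
  have hmodEq : n * k + i ≡ m * k + j [MOD k] :=
    modEq_of_rel_iterate hequiv hcompat hk hγ hper hn hm
  simpa [Nat.ModEq, Nat.mul_add_mod, Nat.mod_eq_of_lt hi, Nat.mod_eq_of_lt hj] using hmodEq

theorem stmt12 {X : Type*} (φ : X → X) (γ : X) (k : ℕ) (hk : 2 ≤ k)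
    (hγ : φ^[k] γ = γ) (r : X → X → Prop) (hequiv : Equivalence r)
    (hcompat : ∀ x y, r x y → r (φ x) (φ y))
    (hper : ∀ i, 1 ≤ i → i < k → ¬ r (φ^[i] γ) γ)
    (α : X) :
    ∀ i j, i < k → j < k →
      (∃ n : ℕ, r (φ^[n * k + i] α) γ) → (∃ n : ℕ, r (φ^[n * k + j] α) γ) →
      i = j :=
  stmt12_general φ γ k hγ r hequiv hcompat hper α
end
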